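/- arXiv:1908.05820 — 2 statements merged into one kernel-verified Lean document; each statement's English description precedes it below -/
import Mathlib

section
/- Let R be a commutative ring and M, N be R-modules such that M and M⊗_R N are finitely generated projective R-modules, and M_p ≠ 0 for every prime ideal p of R. Then N is also a finitely generated projective R-module. -/
open scoped TensorProduct

theorem aux_pi_projective {R : Type u} [CommRing R] (P : Type u) [AddCommGroup P]
    [Module R P] [Module.Projective R P] (n : ℕ) :
    Module.Projective R (Fin n → P) := by
  induction n with
  | zero =>
    haveI : Subsingleton (Fin 0 → P) := ⟨fun a b => funext fun j => j.elim0⟩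
    exact Module.Projective.of_free
  | succ k ih =>
    exact Module.Projective.of_equiv (R := R) (M := P × (Fin k → P))
      (LinearEquiv.symm
        ({ (Fin.consEquiv fun _ : Fin (k + 1) => P).symm with
          map_add' := fun a b => rfl
          map_smul' := fun r a => rfl } : (Fin (k + 1) → P) ≃ₗ[R] P × (Fin k → P)))

/-- Let `R` be a commutative ring and `M`, `N` be `R`-modules such that
`M` and `M ⊗[R] N` are finitely generated projective `R`-modules, and `M_p ≠ 0` for every
prime ideal `p` of `R`. Then `N` is also a finitely generated projective `R`-module. -/
theorem stmt0 {R : Type u} [CommRing R]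
    (M N : Type u) [AddCommGroup M] [Module R M] [AddCommGroup N] [Module R N]
    [Module.Finite R M] [Module.Projective R M]
    [Module.Finite R (M ⊗[R] N)] [Module.Projective R (M ⊗[R] N)]
    (h : ∀ (p : Ideal R) [p.IsPrime], Nontrivial (LocalizedModule p.primeCompl M)) :
    Module.Finite R N ∧ Module.Projective R N := by
  -- dual basis for M
  obtain ⟨n, π, hπ⟩ := Module.Finite.exists_fin' R M
  obtain ⟨i, hi⟩ := Module.projective_lifting_property π LinearMap.id hπ
  set f : Fin n → (M →ₗ[R] R) := fun j => (LinearMap.proj j).comp i with hf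
  set m : Fin n → M := fun j => π (Pi.single j 1) with hm
  have key : ∀ x : M, ∑ j, f j x • m j = x := by
    intro x
    have : ∑ j, f j x • m j = π (∑ j, Pi.single j (i x j)) := by
      rw [map_sum]
      refine Finset.sum_congr rfl fun j _ => ?_
      rw [hf, hm]
      simp only [LinearMap.comp_apply, LinearMap.proj_apply]
      rw [← map_smul, ← Pi.single_smul, smul_eq_mul, mul_one]
    rw [this, Finset.univ_sum_single (i x)]
    have := congrArg (· x) hi
    simpa using this
  -- trace map
  set F : (Fin n → M) →ₗ[R] R := ∑ j, (f j).comp (LinearMap.proj j) with hF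
  have hFapp : ∀ x : Fin n → M, F x = ∑ j, f j (x j) := by
    intro x; rw [hF]; simp [LinearMap.sum_apply]
  have hfj : ∀ j (x : M), f j x ∈ LinearMap.range F := by
    intro j x
    refine ⟨Pi.single j x, ?_⟩
    rw [hFapp]
    rw [Finset.sum_eq_single j (fun b _ hb => by simp [Pi.single_eq_of_ne hb])
      (by simp)]
    simp
  -- the trace ideal is everything
  have hI : LinearMap.range F = (⊤ : Ideal R) := by
    by_contra hne
    obtain ⟨𝔪, h𝔪, hle⟩ := Ideal.exists_le_maximal (LinearMap.range F) hne
    have hMsmul : (⊤ : Submodule R M) ≤ 𝔪 • ⊤ := by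
      intro x _
      rw [← key x]
      exact Submodule.sum_mem _ fun j _ =>
        Submodule.smul_mem_smul (hle (hfj j x)) Submodule.mem_top
    obtain ⟨r, hr1, hr0⟩ := Submodule.exists_sub_one_mem_and_smul_eq_zero_of_fg_of_le_smul
      𝔪 ⊤ (Module.Finite.fg_top) hMsmul
    have hrS : r ∈ 𝔪.primeCompl := fun hrm =>
      h𝔪.ne_top ((Ideal.eq_top_iff_one _).mpr (by simpa using Ideal.sub_mem 𝔪 hrm hr1))
    haveI := h𝔪.isPrime
    haveI := h 𝔪
    have hsub : Subsingleton (LocalizedModule 𝔪.primeCompl M) := by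
      constructor
      intro a b
      induction a using LocalizedModule.induction_on with
      | h ma sa =>
      induction b using LocalizedModule.induction_on with
      | h mb sb =>
      rw [LocalizedModule.mk_eq]
      exact ⟨⟨r, hrS⟩, by simp [Submonoid.smul_def, smul_comm,
        hr0 ma Submodule.mem_top, hr0 mb Submodule.mem_top,
        smul_smul, mul_comm]⟩
    exact (not_subsingleton _) hsub
  have h1 : (1 : R) ∈ LinearMap.range F := hI ▸ Submodule.mem_top
  obtain ⟨x, hx⟩ := h1
  -- N is a retract of (Fin n → M ⊗ N)
  set g : N →ₗ[R] (Fin n → M ⊗[R] N) :=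
    LinearMap.pi (fun j => TensorProduct.mk R M N (x j)) with hg
  set c : Fin n → (M ⊗[R] N →ₗ[R] N) := fun j =>
    (TensorProduct.lid R N).toLinearMap ∘ₗ LinearMap.rTensor N (f j) with hc
  set s : (Fin n → M ⊗[R] N) →ₗ[R] N := ∑ j, (c j).comp (LinearMap.proj j) with hs
  have H : ∀ y : N, s (g y) = y := by
    intro y
    rw [hs]
    simp only [LinearMap.sum_apply, LinearMap.comp_apply, LinearMap.proj_apply, hg,
      LinearMap.pi_apply, hc, LinearEquiv.coe_coe]
    have : ∀ j : Fin n, (TensorProduct.lid R N)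
        (LinearMap.rTensor N (f j) (TensorProduct.mk R M N (x j) y)) = f j (x j) • y := by
      intro j; simp [TensorProduct.mk_apply]
    rw [Finset.sum_congr rfl fun j _ => this j, ← Finset.sum_smul, ← hFapp x, hx, one_smul]
  haveI : Module.Projective R (Fin n → M ⊗[R] N) := aux_pi_projective _ n
  constructor
  · exact Module.Finite.of_surjective s fun y => ⟨g y, H y⟩
  · exact Module.Projective.of_split g s (by ext y; simp [H y])
end

section
/- Let α be a unital partial action of a group G on a commutative ring or commutative monoid T, with ideals D_g = T·1_g for idempotents 1_g. Then the set C^n(G, α, T) of n-cochains, i.e. functions f : G^n → T with f(g_1,…,g_n) invertible in T·1_{g_1}·1_{g_1 g_2}⋯1_{g_1⋯g_n}, is an abelian group under pointwise multiplication, with identity (g_1,…,g_n) ↦ 1_{g_1}·1_{g_1 g_2}⋯1_{g_1⋯g_n}. -/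
/-!
For each tuple `gs` the element `cochainUnit pa n gs` is a product of the idempotents
`1_{g₁⋯g_k}`, hence idempotent. For an idempotent `e` of a commutative monoid, the elements
of `T·e` that are invertible relative to `e` form an abelian group with identity `e`;
cochains are exactly the functions taking values pointwise in these groups.
-/

/-- A unital partial action of a group `G` on a commutative monoid `T`: each ideal
`D_g = T·(e g)` is generated by an idempotent `e g`, and `act g` is (the extension to
all of `T` of) a multiplicative isomorphism `D_{g⁻¹} → D_g`. -/
structure MonoidPartialAction (G : Type*) (T : Type*) [Group G] [CommMonoid T] where
  e : G → T
  idem : ∀ g, IsIdempotentElem (e g)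
  e_one : e 1 = 1
  act : G → T → T
  act_one : ∀ t, act 1 t = t
  act_mul : ∀ g x y, act g (x * y) = act g x * act g y
  act_proj : ∀ g x, act g x = act g (x * e g⁻¹)
  act_e : ∀ g, act g (e g⁻¹) = e g
  mem_range : ∀ g x, act g x * e g = act g x
  act_range : ∀ g h, act g (e g⁻¹ * e h) = e g * e (g * h)
  act_inj : ∀ g x y, x * e g⁻¹ = x → y * e g⁻¹ = y → act g x = act g y → x = y
  act_surj : ∀ g y, y * e g = y → ∃ x, x * e g⁻¹ = x ∧ act g x = y
  act_comp : ∀ g h x, x * (e h⁻¹ * e (g * h)⁻¹) = x → act g (act h x) = act (g * h) x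

variable {G T : Type*} [Group G] [CommMonoid T]

/-- The idempotent `1_{g₁}·1_{g₁g₂}⋯1_{g₁⋯g_n}`, which is the identity element of the
group of `n`-cochains. -/
def cochainUnit (pa : MonoidPartialAction G T) (n : ℕ) (gs : Fin n → G) : T :=
  ∏ i : Fin n, pa.e (((List.ofFn gs).take (i + 1)).prod)

/-- An `n`-cochain of `G` with values in `T`: a function `f : Gⁿ → T` such that
`f (g₁,…,g_n)` is an invertible element of the ideal `T·1_{g₁}·1_{g₁g₂}⋯1_{g₁⋯g_n}`. -/
def IsCochain (pa : MonoidPartialAction G T) (n : ℕ) (f : (Fin n → G) → T) : Prop :=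
  ∀ gs : Fin n → G, f gs * cochainUnit pa n gs = f gs ∧
    ∃ u : T, u * cochainUnit pa n gs = u ∧ f gs * u = cochainUnit pa n gs

def IsUnitIn (e x : T) : Prop :=
  x * e = x ∧ ∃ u : T, u * e = u ∧ x * u = e

namespace IsUnitIn

variable {e x y : T}

theorem self (he : IsIdempotentElem e) : IsUnitIn e e :=
  ⟨he, e, he, he⟩

theorem mul (he : IsIdempotentElem e) (hx : IsUnitIn e x) (hy : IsUnitIn e y) :
    IsUnitIn e (x * y) := by
  obtain ⟨hxe, u, hue, hxu⟩ := hx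
  obtain ⟨hye, v, hve, hyv⟩ := hy
  refine ⟨by rw [mul_assoc, hye], u * v, by rw [mul_assoc, hve], ?_⟩
  calc x * y * (u * v) = (x * u) * (y * v) := mul_mul_mul_comm _ _ _ _
    _ = e := by rw [hxu, hyv, he.eq]

theorem exists_inv (hx : IsUnitIn e x) : ∃ u, IsUnitIn e u ∧ x * u = e := by
  obtain ⟨hxe, u, hue, hxu⟩ := hx
  exact ⟨u, ⟨hue, x, hxe, by rw [mul_comm, hxu]⟩, hxu⟩

end IsUnitIn

theorem isIdempotentElem_cochainUnit (pa : MonoidPartialAction G T) (n : ℕ) (gs : Fin n → G) :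
    IsIdempotentElem (cochainUnit pa n gs) :=
  Finset.prod_induction _ IsIdempotentElem (fun _ _ => IsIdempotentElem.mul)
    IsIdempotentElem.one fun _ _ => pa.idem _

theorem isCochain_iff_forall_isUnitIn (pa : MonoidPartialAction G T) (n : ℕ)
    (f : (Fin n → G) → T) :
    IsCochain pa n f ↔ ∀ gs, IsUnitIn (cochainUnit pa n gs) (f gs) :=
  Iff.rfl

/-- The set `C^n(G,α,T)` of `n`-cochains is an abelian group under
pointwise multiplication, with identity `(g₁,…,g_n) ↦ 1_{g₁}·1_{g₁g₂}⋯1_{g₁⋯g_n}`: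
it contains the latter map, is closed under the (commutative, associative, pointwise)
multiplication, the latter map is a two-sided identity on it, and every `n`-cochain has an
inverse which is again an `n`-cochain. -/
theorem stmt4 (pa : MonoidPartialAction G T) (n : ℕ) :
    IsCochain pa n (cochainUnit pa n) ∧
    (∀ f f' : (Fin n → G) → T, IsCochain pa n f → IsCochain pa n f' →
      IsCochain pa n (fun gs => f gs * f' gs)) ∧
    (∀ f : (Fin n → G) → T, IsCochain pa n f →
      (fun gs => f gs * cochainUnit pa n gs) = f ∧
      (fun gs => cochainUnit pa n gs * f gs) = f) ∧
    (∀ f : (Fin n → G) → T, IsCochain pa n f →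
      ∃ finv : (Fin n → G) → T, IsCochain pa n finv ∧
        (fun gs => f gs * finv gs) = cochainUnit pa n) := by
  have hidem := isIdempotentElem_cochainUnit pa n
  simp only [isCochain_iff_forall_isUnitIn]
  refine ⟨fun gs => .self (hidem gs), fun f f' hf hf' gs => (hf gs).mul (hidem gs) (hf' gs),
    fun f hf => ⟨funext fun gs => (hf gs).1, funext fun gs => mul_comm _ (f gs) ▸ (hf gs).1⟩,
    fun f hf => ?_⟩
  choose finv hfinv hmul using fun gs => (hf gs).exists_inv
  exact ⟨finv, hfinv, funext hmul⟩
end
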